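/- arXiv:2203.11886 — 3 statements merged into one kernel-verified Lean document; each statement's English description precedes it below -/
import Mathlib

section
/- (Richmond–Shallit recursion) For d ≥ 2 and n ≥ 0, f_d(n) = Σ_{k=0}^{n} C(n,k)^2 · f_{d-1}(k), where f_d(n) = Σ_{m_1+⋯+m_d=n} (n!/(m_1!⋯m_d!))^2. -/
/-! Split off the first letter: if it occurs `a` times among `n = a + b`, then
`n! / (a! m₂! ⋯ m_d!) = C(n, b) · b! / (m₂! ⋯ m_d!)`, and the remaining `b` letters form a
term of `f (d - 1) b`. -/

/-- `f d n = Σ_{m₁+⋯+m_d = n} (n! / (m₁! ⋯ m_d!))²`, the number of abelian squares of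
length `n + n` over a `d`-letter alphabet. -/
def f (d n : ℕ) : ℕ :=
  ∑ m ∈ Finset.Nat.antidiagonalTuple d n, (Nat.multinomial Finset.univ m) ^ 2

open Finset

theorem Finset.Nat.sum_antidiagonalTuple_succ {M : Type*} [AddCommMonoid M] (k n : ℕ)
    (g : (Fin (k + 1) → ℕ) → M) :
    ∑ m ∈ Nat.antidiagonalTuple (k + 1) n, g m =
      ∑ p ∈ antidiagonal n, ∑ x ∈ Nat.antidiagonalTuple k p.2, g (Fin.cons p.1 x) := by
  simp only [Finset.sum, Nat.antidiagonalTuple, Multiset.Nat.antidiagonalTuple,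
    List.Nat.antidiagonalTuple, HasAntidiagonal.antidiagonal, Multiset.Nat.antidiagonal]
  simp [List.flatMap_def, List.sum_flatten, Function.comp_def]

theorem Nat.multinomial_univ_fin_cons {k : ℕ} (a : ℕ) (x : Fin k → ℕ) :
    Nat.multinomial univ (Fin.cons a x : Fin (k + 1) → ℕ) =
      (a + ∑ i, x i).choose a * Nat.multinomial univ x := by
  rw [Fin.univ_succ, Nat.multinomial_cons]
  simp [Nat.multinomial, Finset.sum_map, Finset.prod_map]

theorem f_succ (d n : ℕ) :
    f (d + 1) n = ∑ k ∈ range (n + 1), (n.choose k) ^ 2 * f d k := by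
  have split_first : ∀ p ∈ antidiagonal n,
      ∑ x ∈ Nat.antidiagonalTuple d p.2,
          (Nat.multinomial univ (Fin.cons p.1 x : Fin (d + 1) → ℕ)) ^ 2 =
        (n.choose p.2) ^ 2 * f d p.2 := by
    intro p hp
    rw [f, mul_sum]
    refine sum_congr rfl fun x hx => ?_
    rw [Nat.multinomial_univ_fin_cons, Nat.mem_antidiagonalTuple.1 hx, Nat.choose_symm_add,
      mem_antidiagonal.1 hp, mul_pow]
  rw [f, Nat.sum_antidiagonalTuple_succ, sum_congr rfl split_first, ← Nat.sum_antidiagonal_swap,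
    Nat.sum_antidiagonal_eq_sum_range_succ_mk]
  rfl

theorem richmond_shallit_recursion (d n : ℕ) (hd : 2 ≤ d) :
    f d n = ∑ k ∈ Finset.range (n + 1), (n.choose k) ^ 2 * f (d - 1) k := by
  obtain ⟨e, rfl⟩ : ∃ e, d = e + 1 := ⟨d - 1, by omega⟩
  exact f_succ e n
end

section
/- (Main result) For d ≥ 2 and n ≥ 1, f_d(n) = d · Σ_{k=0}^{n-1} C(n,k) · C(n-1,k) · f_{d-1}(k), where f_d(n) = Σ_{m_1+⋯+m_d=n} (n!/(m_1!⋯m_d!))^2. -/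
/-!
Weighting every term of `f d n` by `n = m₁ + ⋯ + m_d` and using the symmetry of the multinomial
coefficient gives `n · f d n = d · Σ m₁ · multinomial(m)²`. Splitting off the first part `m₁ = a`,
the multinomial coefficient factors as `C(n, a) · multinomial(m₂, …, m_d)`, so this sum
is `d · Σ_a a · C(n, a)² · f (d - 1) (n - a)`; with `k = n - a` the identity
`(n - k) · C(n, k) = n · C(n - 1, k)` leaves `d · n · Σ_k C(n, k) · C(n - 1, k) · f (d - 1) k`.
-/

open Finset

namespace Nat

theorem multinomial_univ_comp_equiv {α β : Type*} [Fintype α] [Fintype β] (σ : α ≃ β)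
    (m : β → ℕ) : multinomial univ (m ∘ σ) = multinomial univ m := by
  simp only [multinomial, Function.comp_apply, Equiv.sum_comp σ m,
    Equiv.prod_comp σ fun i => (m i)!]

theorem multinomial_univ_fin_cons_s4 {e : ℕ} (a : ℕ) (t : Fin e → ℕ) :
    multinomial univ (Fin.cons a t : Fin (e + 1) → ℕ)
      = (a + ∑ i, t i).choose a * multinomial univ t := by
  rw [Fin.univ_succ, multinomial_cons]
  simp [multinomial, sum_map, prod_map]

theorem sub_mul_choose (n k : ℕ) : (n - k) * n.choose k = n * (n - 1).choose k := by
  rcases n with _ | n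
  · simp
  · simpa [mul_comm] using (choose_mul_succ_eq n k).symm

end Nat

namespace Finset.Nat

variable {M : Type*} [AddCommMonoid M]

theorem sum_antidiagonalTuple_comp_perm {d : ℕ} (n : ℕ) (σ : Equiv.Perm (Fin d))
    (F : (Fin d → ℕ) → M) :
    ∑ m ∈ antidiagonalTuple d n, F (m ∘ σ) = ∑ m ∈ antidiagonalTuple d n, F m := by
  have hmem : ∀ (τ : Equiv.Perm (Fin d)) m,
      m ∈ antidiagonalTuple d n → m ∘ τ ∈ antidiagonalTuple d n := by
    intro τ m hm
    rw [mem_antidiagonalTuple] at hm ⊢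
    rwa [Function.comp_def, Equiv.sum_comp τ m]
  refine sum_nbij' (· ∘ σ) (· ∘ σ.symm) (hmem σ) (hmem σ.symm) ?_ ?_ fun _ _ => rfl <;>
    intro m _ <;> ext <;> simp

theorem sum_antidiagonalTuple_succ_s4 {e : ℕ} (n : ℕ) (F : (Fin (e + 1) → ℕ) → M) :
    ∑ m ∈ antidiagonalTuple (e + 1) n, F m
      = ∑ p ∈ antidiagonal n, ∑ t ∈ antidiagonalTuple e p.2, F (Fin.cons p.1 t) := by
  rw [sum_sigma']
  refine sum_nbij' (fun m => ⟨(m 0, ∑ i, Fin.tail m i), Fin.tail m⟩)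
    (fun x => Fin.cons x.1.1 x.2) ?_ ?_ (fun m _ => Fin.cons_self_tail m) ?_
    (fun m _ => by rw [Fin.cons_self_tail])
  · intro m hm
    rw [mem_antidiagonalTuple, Fin.sum_univ_succ] at hm
    simpa [mem_antidiagonalTuple, Fin.tail] using hm
  · rintro ⟨⟨a, b⟩, t⟩ hx
    rw [mem_sigma, HasAntidiagonal.mem_antidiagonal, mem_antidiagonalTuple] at hx
    simp [mem_antidiagonalTuple, Fin.sum_univ_succ, hx.2, hx.1]
  · rintro ⟨⟨a, b⟩, t⟩ hx
    rw [mem_sigma, HasAntidiagonal.mem_antidiagonal, mem_antidiagonalTuple] at hx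
    simp [hx.2]

end Finset.Nat

open Finset.Nat

theorem sum_apply_mul_multinomial_sq_eq (d n : ℕ) (i j : Fin d) :
    ∑ m ∈ antidiagonalTuple d n, m i * (Nat.multinomial univ m) ^ 2
      = ∑ m ∈ antidiagonalTuple d n, m j * (Nat.multinomial univ m) ^ 2 := by
  rw [← sum_antidiagonalTuple_comp_perm n (Equiv.swap i j)]
  simp [Nat.multinomial_univ_comp_equiv]

theorem mul_f_succ_eq_mul_sum_head (e n : ℕ) :
    n * f (e + 1) n
      = (e + 1) * ∑ m ∈ antidiagonalTuple (e + 1) n, m 0 * (Nat.multinomial univ m) ^ 2 := by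
  calc n * f (e + 1) n
      = ∑ i : Fin (e + 1), ∑ m ∈ antidiagonalTuple (e + 1) n,
          m i * (Nat.multinomial univ m) ^ 2 := by
        rw [f, mul_sum, sum_comm]
        refine sum_congr rfl fun m hm => ?_
        rw [← sum_mul, mem_antidiagonalTuple.mp hm]
    _ = (e + 1) * _ := by
        simp [sum_apply_mul_multinomial_sq_eq (e + 1) n _ 0]

theorem sum_head_mul_multinomial_sq (e n : ℕ) :
    ∑ m ∈ antidiagonalTuple (e + 1) n, m 0 * (Nat.multinomial univ m) ^ 2
      = ∑ p ∈ antidiagonal n, p.1 * n.choose p.1 ^ 2 * f e p.2 := by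
  rw [sum_antidiagonalTuple_succ_s4]
  refine sum_congr rfl fun p hp => ?_
  rw [f, mul_sum]
  refine sum_congr rfl fun t ht => ?_
  rw [Fin.cons_zero, Nat.multinomial_univ_fin_cons_s4, mem_antidiagonalTuple.mp ht,
    HasAntidiagonal.mem_antidiagonal.mp hp]
  ring

theorem sum_antidiagonal_fst_mul_choose_sq (n : ℕ) (g : ℕ → ℕ) :
    ∑ p ∈ antidiagonal n, p.1 * n.choose p.1 ^ 2 * g p.2
      = n * ∑ k ∈ range n, n.choose k * (n - 1).choose k * g k := by
  rw [← sum_antidiagonal_swap]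
  simp only [Prod.fst_swap, Prod.snd_swap]
  rw [sum_antidiagonal_eq_sum_range_succ (fun k a => a * n.choose a ^ 2 * g k), sum_range_succ,
    Nat.sub_self, zero_mul, zero_mul, add_zero, mul_sum]
  refine sum_congr rfl fun k hk => ?_
  rw [Nat.choose_symm (mem_range.mp hk).le]
  calc (n - k) * n.choose k ^ 2 * g k = (n - k) * n.choose k * n.choose k * g k := by ring
    _ = n * (n.choose k * (n - 1).choose k * g k) := by rw [Nat.sub_mul_choose]; ring

theorem abelian_square_recursion_general (d n : ℕ) (hn : 1 ≤ n) :
    f d n = d * ∑ k ∈ Finset.range n, n.choose k * (n - 1).choose k * f (d - 1) k := by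
  rcases d with _ | e
  · obtain ⟨n, rfl⟩ := Nat.exists_eq_add_of_le' hn
    simp [f]
  apply Nat.eq_of_mul_eq_mul_left hn
  rw [mul_f_succ_eq_mul_sum_head, sum_head_mul_multinomial_sq, sum_antidiagonal_fst_mul_choose_sq,
    Nat.add_sub_cancel]
  ring

theorem abelian_square_recursion (d n : ℕ) (hd : 2 ≤ d) (hn : 1 ≤ n) :
    f d n = d * ∑ k ∈ Finset.range n, n.choose k * (n - 1).choose k * f (d - 1) k :=
  abelian_square_recursion_general d n hn
end

section
/- The number of abelian squares (x,y) of length n+n over an alphabet A of size d such that x begins with a fixed letter a ∈ A equals Σ_{k=0}^{n-1} C(n-1,k) · C(n,k) · f_{d-1}(k), where f_{d-1}(k) counts abelian squares of length k+k over A \ {a}. -/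
open Finset

section Parikh

variable {ι α : Type*} [Fintype ι] [DecidableEq α]

def parikh (x : ι → α) (b : α) : ℕ := #{i | x i = b}

lemma parikh_eq_card_subtype (x : ι → α) (b : α) : parikh x b = Fintype.card {i // x i = b} :=
  (Fintype.card_subtype _).symm

lemma sum_parikh [Fintype α] (x : ι → α) : ∑ b, parikh x b = Fintype.card ι :=
  (card_eq_sum_card_fiberwise fun i _ => mem_univ (x i)).symm

lemma parikh_comp_perm (x : ι → α) (σ : Equiv.Perm ι) : parikh (x ∘ σ) = parikh x := by
  ext b
  simp only [parikh_eq_card_subtype]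
  exact Fintype.card_congr (σ.subtypeEquiv fun _ => Iff.rfl)

lemma exists_perm_comp_eq_of_parikh_eq {x y : ι → α} (h : parikh x = parikh y) :
    ∃ σ : Equiv.Perm ι, x ∘ σ = y := by
  have e (b : α) : {i // y i = b} ≃ {i // x i = b} :=
    Fintype.equivOfCardEq <| by simp only [← parikh_eq_card_subtype, h]
  exact ⟨Equiv.ofFiberEquiv e, funext (Equiv.ofFiberEquiv_map e)⟩

lemma exists_parikh_eq [Fintype α] {m : α → ℕ} (hm : ∑ b, m b = Fintype.card ι) :
    ∃ x : ι → α, parikh x = m := by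
  obtain ⟨e⟩ : Nonempty (ι ≃ Σ b, Fin (m b)) := ⟨Fintype.equivOfCardEq (by simp [hm])⟩
  refine ⟨fun i => (e i).1, funext fun b => ?_⟩
  rw [parikh_eq_card_subtype, Fintype.card_congr ((e.subtypeEquiv (q := fun p => p.1 = b)
    fun _ => Iff.rfl).trans (Equiv.sigmaSubtype b)), Fintype.card_fin]

lemma card_perm_comp_eq [DecidableEq ι] [Fintype α] {x y : ι → α} (h : parikh x = parikh y) :
    #{σ : Equiv.Perm ι | x ∘ σ = y} = ∏ b, (parikh x b).factorial := by
  obtain ⟨τ, rfl⟩ := exists_perm_comp_eq_of_parikh_eq h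
  have shift : #{σ : Equiv.Perm ι | x ∘ σ = x ∘ τ} = #{σ : Equiv.Perm ι | x ∘ σ = x} := by
    refine card_nbij' (· * τ⁻¹) (· * τ) ?_ ?_ (fun _ _ => by simp) (fun _ _ => by simp)
    all_goals intro σ hσ; simp only [coe_filter, mem_univ, true_and, Set.mem_ofPred_eq] at hσ ⊢
    · rw [Equiv.Perm.coe_mul, ← Function.comp_assoc, hσ, Equiv.Perm.coe_inv, Function.comp_assoc,
        Equiv.self_comp_symm, Function.comp_id]
    · rw [Equiv.Perm.coe_mul, ← Function.comp_assoc, hσ]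
  rw [shift, ← Fintype.card_subtype, DomMulAct.stabilizer_card]
  simp only [parikh_eq_card_subtype]

theorem card_parikh_eq_multinomial [DecidableEq ι] [Fintype α] {m : α → ℕ}
    (hm : ∑ b, m b = Fintype.card ι) :
    #{x : ι → α | parikh x = m} = Nat.multinomial univ m := by
  obtain ⟨x₀, rfl⟩ := exists_parikh_eq hm
  have orbit := card_eq_sum_card_fiberwise (s := (univ : Finset (Equiv.Perm ι)))
    (f := fun σ : Equiv.Perm ι => x₀ ∘ σ) (t := {x | parikh x = parikh x₀}) fun σ _ => by simp [parikh_comp_perm]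
  rw [sum_congr rfl fun x hx => card_perm_comp_eq (mem_filter.1 hx).2.symm, sum_const, smul_eq_mul,
    card_univ, Fintype.card_perm, ← hm, ← Nat.multinomial_spec, mul_comm] at orbit
  exact (Nat.eq_of_mul_eq_mul_right (prod_pos fun b _ => Nat.factorial_pos _) orbit).symm

lemma parikh_cons {n : ℕ} (a : α) (x : Fin n → α) :
    parikh (Fin.cons a x : Fin (n + 1) → α) = Pi.single a 1 + parikh x := by
  ext b
  simp only [parikh, card_filter, Fin.sum_univ_succ, Fin.cons_zero, Fin.cons_succ, Pi.add_apply,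
    Pi.single_apply, eq_comm (a := b)]

end Parikh

lemma card_filter_prod_eq_sum_mul {X Y M : Type*} [Fintype X] [Fintype Y] [DecidableEq M]
    (F : X → M) (G : Y → M) (g : M → M) {s : Finset M} (hs : ∀ x, F x ∈ s) :
    #{p : X × Y | g (F p.1) = G p.2} = ∑ m ∈ s, #{x | F x = m} * #{y | G y = g m} := by
  rw [card_eq_sum_card_fiberwise (f := fun p : X × Y => F p.1) fun p _ => hs p.1]
  refine sum_congr rfl fun m _ => ?_
  rw [← card_product, filter_filter]
  congr 1
  ext ⟨x, y⟩
  simp only [mem_filter, mem_univ, true_and, mem_product]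
  constructor
  · rintro ⟨h, rfl⟩; exact ⟨rfl, h.symm⟩
  · rintro ⟨rfl, h⟩; exact ⟨h.symm, rfl⟩

lemma Nat.multinomial_insertNth {d : ℕ} (a : Fin (d + 1)) (j : ℕ) (r : Fin d → ℕ) :
    Nat.multinomial univ (a.insertNth j r)
      = (j + ∑ i, r i).choose (∑ i, r i) * Nat.multinomial univ r := by
  have hpos : 0 < ∏ i, ((a.insertNth j r : Fin (d + 1) → ℕ) i).factorial :=
    prod_pos fun i _ => factorial_pos _
  refine Nat.eq_of_mul_eq_mul_left hpos ?_
  rw [Nat.multinomial_spec, Fin.prod_univ_succAbove _ a, Fin.sum_insertNth]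
  simp only [Fin.insertNth_apply_same, Fin.insertNth_apply_succAbove]
  rw [← Nat.add_choose_mul_factorial_mul_factorial, ← Nat.multinomial_spec univ r]
  ring

lemma Finset.Nat.sum_antidiagonalTuple_succ_insertNth {M : Type*} [AddCommMonoid M] (d n : ℕ)
    (a : Fin (d + 1)) (G : (Fin (d + 1) → ℕ) → M) :
    ∑ m ∈ antidiagonalTuple (d + 1) n, G m
      = ∑ p ∈ antidiagonal n, ∑ r ∈ antidiagonalTuple d p.1, G (a.insertNth p.2 r) := by
  rw [sum_sigma']
  refine sum_nbij' (fun m => ⟨(∑ i, a.removeNth m i, m a), a.removeNth m⟩)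
    (fun q => (a.insertNth q.1.2 q.2 : Fin (d + 1) → ℕ)) ?_ ?_ ?_ ?_ ?_
  · intro m hm
    simp only [mem_sigma, HasAntidiagonal.mem_antidiagonal, mem_antidiagonalTuple, and_true]
      at hm ⊢
    rw [← hm, ← Fin.add_sum_removeNth a m, add_comm]
  · rintro ⟨⟨k, j⟩, r⟩ hq
    simp only [mem_sigma, HasAntidiagonal.mem_antidiagonal, mem_antidiagonalTuple] at hq ⊢
    rw [Fin.sum_insertNth, hq.2, add_comm, hq.1]
  · intro m _
    simp
  · rintro ⟨⟨k, j⟩, r⟩ hq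
    simp only [mem_sigma, HasAntidiagonal.mem_antidiagonal, mem_antidiagonalTuple] at hq
    simp [hq.2]
  · intro m _
    simp

lemma sum_multinomial_insertNth_mul_insertNth_succ {d : ℕ} (a : Fin (d + 1)) (j k : ℕ) :
    ∑ r ∈ Nat.antidiagonalTuple d k,
        Nat.multinomial univ (a.insertNth j r) * Nat.multinomial univ (a.insertNth (j + 1) r)
      = (j + k).choose k * (j + k + 1).choose k * f d k := by
  rw [f, mul_sum]
  refine sum_congr rfl fun r hr => ?_
  rw [Nat.multinomial_insertNth, Nat.multinomial_insertNth, Nat.mem_antidiagonalTuple.1 hr,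
    add_right_comm]
  ring

section FirstLetter

variable {α : Type*} [Fintype α] [DecidableEq α]

lemma card_abelianSquare_head_eq_card_tail (a : α) (n : ℕ) :
    #{p : (Fin (n + 1) → α) × (Fin (n + 1) → α) | parikh p.1 = parikh p.2 ∧ p.1 0 = a}
      = #{p : (Fin n → α) × (Fin (n + 1) → α) | Pi.single a 1 + parikh p.1 = parikh p.2} := by
  symm
  refine card_nbij' (fun p => (Fin.cons a p.1, p.2)) (fun p => (Fin.tail p.1, p.2)) ?_ ?_ ?_ ?_
  · intro p hp
    simp_all [parikh_cons]
  · rintro ⟨x, y⟩ hp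
    simp only [coe_filter, mem_univ, true_and, Set.mem_ofPred_eq] at hp ⊢
    rw [← hp.1, ← hp.2, ← parikh_cons, Fin.cons_self_tail]
  · intro p _
    simp
  · rintro ⟨x, y⟩ hp
    simp only [coe_filter, mem_univ, true_and, Set.mem_ofPred_eq] at hp
    simp [← hp.2]

theorem card_abelianSquare_head_eq_sum (a : α) (n : ℕ) :
    #{p : (Fin (n + 1) → α) × (Fin (n + 1) → α) | parikh p.1 = parikh p.2 ∧ p.1 0 = a}
      = ∑ m ∈ piAntidiag univ n,
          Nat.multinomial univ m * Nat.multinomial univ (Pi.single a 1 + m) := by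
  rw [card_abelianSquare_head_eq_card_tail]
  refine (card_filter_prod_eq_sum_mul (X := Fin n → α) (Y := Fin (n + 1) → α) parikh parikh
    (Pi.single a 1 + ·) (s := piAntidiag univ n) fun x => ?_).trans
    (sum_congr rfl fun m hm => ?_)
  · simp [sum_parikh]
  · have hsum : ∑ b, m b = n := by simpa using hm
    rw [card_parikh_eq_multinomial (by simpa using hsum), card_parikh_eq_multinomial]
    simp [sum_add_distrib, hsum, add_comm]

end FirstLetter

theorem abelianSquares_first_letter_fixed (d n : ℕ) (hn : 0 < n) (a : Fin d) :
    Fintype.card {p : (Fin n → Fin d) × (Fin n → Fin d) //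
        (∀ b : Fin d, (Finset.univ.filter (fun i => p.1 i = b)).card
                    = (Finset.univ.filter (fun i => p.2 i = b)).card) ∧
        p.1 ⟨0, hn⟩ = a}
      = ∑ k ∈ Finset.range n, (n - 1).choose k * n.choose k * f (d - 1) k := by
  obtain ⟨n, rfl⟩ := Nat.exists_eq_add_one_of_ne_zero hn.ne'
  obtain ⟨d, rfl⟩ := Nat.exists_eq_add_one_of_ne_zero a.pos.ne'
  calc _ = #{p : (Fin (n + 1) → Fin (d + 1)) × (Fin (n + 1) → Fin (d + 1)) |
          parikh p.1 = parikh p.2 ∧ p.1 0 = a} := by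
        rw [← Fintype.card_subtype]
        exact Fintype.card_congr (Equiv.subtypeEquivRight fun p => by simp [parikh, funext_iff])
    _ = ∑ p ∈ antidiagonal n, ∑ r ∈ Nat.antidiagonalTuple d p.1,
          Nat.multinomial univ (a.insertNth p.2 r)
            * Nat.multinomial univ (a.insertNth (p.2 + 1) r) := by
        rw [card_abelianSquare_head_eq_sum, piAntidiag_univ_fin_eq_antidiagonalTuple,
          Nat.sum_antidiagonalTuple_succ_insertNth _ _ a]
        simp only [← Fin.insertNth_zero_right, ← Fin.insertNth_add, zero_add, add_comm 1]
    _ = ∑ p ∈ antidiagonal n, n.choose p.1 * (n + 1).choose p.1 * f d p.1 := by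
        refine sum_congr rfl fun p hp => ?_
        rw [sum_multinomial_insertNth_mul_insertNth_succ, add_comm p.2,
          HasAntidiagonal.mem_antidiagonal.1 hp]
    _ = _ := by
        rw [Nat.sum_antidiagonal_eq_sum_range_succ_mk]
        simp
end
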